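/- Natural configurations are uniquely determined by their rampart counts at heights y ≥ 2: the map sending a natural configuration n to the sequence (|{x ∈ {1,…,L} : g_n(x) ≥ y}|)_{y ≥ 2} is injective on the set of natural configurations, where g_n(x) = Σ_{y=x}^{L} (n(y) − 1). -/
import Mathlib


def NaturalCfg {L : ℕ} (z : Fin (L + 1) → Fin 3) : Prop :=
  (∀ x : Fin (L + 1), (x : ℕ) < L → 1 ≤ z x) ∧ z (Fin.last L) = 2

def heightFn {L : ℕ} (z : Fin L → Fin 3) (x : Fin L) : ℤ :=
  ∑ y ∈ Finset.univ.filter (fun y => x ≤ y), ((z y : ℤ) - 1)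

def rampart {L : ℕ} (z : Fin L → Fin 3) (y : ℕ) : ℕ :=
  (Finset.univ.filter (fun x => (y : ℤ) ≤ heightFn z x)).card

lemma natural_one_le {L : ℕ} {z : Fin (L + 1) → Fin 3} (hz : NaturalCfg z)
    (y : Fin (L + 1)) : 1 ≤ (z y : ℕ) := by
  rcases lt_or_eq_of_le (Nat.lt_succ_iff.mp y.isLt) with hy | hy
  · exact hz.1 y hy
  · have : y = Fin.last L := Fin.ext hy
    rw [this, hz.2]; decide

lemma height_anti {L : ℕ} {z : Fin (L + 1) → Fin 3} (hz : NaturalCfg z)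
    {x x' : Fin (L + 1)} (hxx : x ≤ x') : heightFn z x' ≤ heightFn z x := by
  apply Finset.sum_le_sum_of_subset_of_nonneg
  · intro y hy
    simp only [Finset.mem_filter, Finset.mem_univ, true_and] at *
    exact hxx.trans hy
  · intro y _ _
    have := natural_one_le hz y
    omega

lemma height_last {L : ℕ} {z : Fin (L + 1) → Fin 3} (hz : NaturalCfg z) :
    heightFn z (Fin.last L) = 1 := by
  unfold heightFn
  have hset : Finset.univ.filter (fun y => Fin.last L ≤ y) = {Fin.last L} := by
    ext y
    simp only [Finset.mem_filter, Finset.mem_univ, true_and, Finset.mem_singleton]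
    constructor
    · intro hy; exact le_antisymm (Fin.le_last y) hy |>.symm ▸ rfl
    · intro hy; rw [hy]
  rw [hset, Finset.sum_singleton, hz.2]
  decide

lemma height_ge_one {L : ℕ} {z : Fin (L + 1) → Fin 3} (hz : NaturalCfg z)
    (x : Fin (L + 1)) : 1 ≤ heightFn z x := by
  have := height_anti hz (Fin.le_last x)
  rw [height_last hz] at this
  exact this

lemma lower_mem_iff {m : ℕ} (S : Finset (Fin m))
    (hS : ∀ a b : Fin m, a ≤ b → b ∈ S → a ∈ S) (x : Fin m) :
    x ∈ S ↔ (x : ℕ) < S.card := by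
  constructor
  · intro hx
    have h1 : Finset.Iic x ⊆ S := fun a ha => hS a x (Finset.mem_Iic.mp ha) hx
    have := Finset.card_le_card h1
    rw [Fin.card_Iic] at this
    omega
  · intro hx
    by_contra hxS
    have h1 : S ⊆ Finset.Iio x := by
      intro b hb
      rw [Finset.mem_Iio]
      by_contra hbx
      exact hxS (hS x b (le_of_not_gt hbx) hb)
    have := Finset.card_le_card h1
    rw [Fin.card_Iio] at this
    omega

lemma mem_rampart_iff {L : ℕ} {z : Fin (L + 1) → Fin 3} (hz : NaturalCfg z)
    (y : ℕ) (x : Fin (L + 1)) :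
    (y : ℤ) ≤ heightFn z x ↔ (x : ℕ) < rampart z y := by
  have := lower_mem_iff (Finset.univ.filter (fun x => (y : ℤ) ≤ heightFn z x))
    (fun a b hab hb => by
      simp only [Finset.mem_filter, Finset.mem_univ, true_and] at *
      exact hb.trans (height_anti hz hab)) x
  simpa [rampart] using this

lemma height_le {L : ℕ} (n₁ n₂ : Fin (L + 1) → Fin 3) (h₁ : NaturalCfg n₁)
    (h₂ : NaturalCfg n₂)
    (h : ∀ y : ℕ, 2 ≤ y → rampart n₁ y = rampart n₂ y) (x : Fin (L + 1)) :
    heightFn n₁ x ≤ heightFn n₂ x := by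
  by_contra hlt
  push_neg at hlt
  have hg2 := height_ge_one h₂ x
  set y : ℕ := (heightFn n₂ x).toNat + 1 with hy
  have hyc : (y : ℤ) = heightFn n₂ x + 1 := by
    have := Int.toNat_of_nonneg (le_trans (by norm_num) hg2)
    push_cast [hy]
    omega
  have hy2 : 2 ≤ y := by omega
  have hx1 : (y : ℤ) ≤ heightFn n₁ x := by omega
  have hx2 : ¬ (y : ℤ) ≤ heightFn n₂ x := by omega
  rw [mem_rampart_iff h₁ y x, h y hy2] at hx1
  rw [mem_rampart_iff h₂ y x] at hx2
  exact hx2 hx1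

lemma height_eq {L : ℕ} (n₁ n₂ : Fin (L + 1) → Fin 3) (h₁ : NaturalCfg n₁)
    (h₂ : NaturalCfg n₂)
    (h : ∀ y : ℕ, 2 ≤ y → rampart n₁ y = rampart n₂ y) (x : Fin (L + 1)) :
    heightFn n₁ x = heightFn n₂ x :=
  le_antisymm (height_le n₁ n₂ h₁ h₂ h x)
    (height_le n₂ n₁ h₂ h₁ (fun y hy => (h y hy).symm) x)

lemma height_step {L : ℕ} (z : Fin (L + 1) → Fin 3) (x : Fin (L + 1))
    (hx : (x : ℕ) < L) :
    heightFn z x = ((z x : ℤ) - 1) + heightFn z ⟨(x : ℕ) + 1, by omega⟩ := by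
  unfold heightFn
  have hsplit : Finset.univ.filter (fun y => x ≤ y)
      = insert x (Finset.univ.filter
          (fun y => (⟨(x : ℕ) + 1, by omega⟩ : Fin (L + 1)) ≤ y)) := by
    ext y
    simp only [Finset.mem_filter, Finset.mem_univ, true_and, Finset.mem_insert,
      Fin.le_def, Fin.ext_iff]
    omega
  rw [hsplit, Finset.sum_insert (by simp [Fin.le_def])]

theorem rampart_counts_injective_on_natural {L : ℕ}
    (n₁ n₂ : Fin (L + 1) → Fin 3) (h₁ : NaturalCfg n₁) (h₂ : NaturalCfg n₂)
    (h : ∀ y : ℕ, 2 ≤ y → rampart n₁ y = rampart n₂ y) :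
    n₁ = n₂ := by
  funext x
  rcases lt_or_eq_of_le (Nat.lt_succ_iff.mp x.isLt) with hx | hx
  · have e1 := height_step n₁ x hx
    have e2 := height_step n₂ x hx
    have g1 := height_eq n₁ n₂ h₁ h₂ h x
    have g2 := height_eq n₁ n₂ h₁ h₂ h ⟨(x : ℕ) + 1, by omega⟩
    have : (n₁ x : ℤ) = (n₂ x : ℤ) := by omega
    have hval : (n₁ x : ℕ) = (n₂ x : ℕ) := by exact_mod_cast this
    exact Fin.ext hval
  · have hxl : x = Fin.last L := Fin.ext hx
    rw [hxl, h₁.2, h₂.2]
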